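/- Let f : X ⟶ Y be an integral morphism of schemes. If x and x' are points of the underlying space of X such that x specializes to x' (i.e., x' lies in the closure of {x}) and f(x) = f(x'), then x = x'. In other words, there are no nontrivial specializations within the fibres of an integral morphism. -/

import Mathlib

/-!
Over an affine open of `Y` the morphism is `Spec` of an integral ring map, so the claim is the
incomparability property of integral extensions: a strict inclusion of primes `P < Q` of `S`
contracts to a strict inclusion of primes of `R`.
-/

open AlgebraicGeometry

theorem PrimeSpectrum.eq_of_specializes_of_comap_eq {R S : Type*} [CommRing R] [CommRing S]
    {f : R →+* S} (hf : f.IsIntegral) {p q : PrimeSpectrum S} (h : p ⤳ q)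
    (he : PrimeSpectrum.comap f p = PrimeSpectrum.comap f q) : p = q := by
  algebraize [f]
  by_contra hne
  have hlt : p.asIdeal < q.asIdeal := ((le_iff_specializes p q).mpr h).lt_of_ne hne
  exact (Ideal.IsIntegral.comap_lt_comap (R := R) hlt).ne congr(($he).asIdeal)

namespace AlgebraicGeometry.Scheme.Hom

variable {X Y : Scheme} (f : X ⟶ Y) [IsIntegralHom f]

theorem eq_of_specializes_of_isAffine [IsAffine Y] {x x' : X} (h : x ⤳ x')
    (hf : f x = f x') : x = x' := by
  obtain ⟨_, hint⟩ := IsIntegralHom.hasAffineProperty.iff_of_isAffine (f := f) |>.mp ‹_›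
  have hbase : ∀ z, (Spec.map f.appTop).base (X.isoSpec.hom z) = Y.isoSpec.hom (f z) := fun z ↦ by
    rw [← Scheme.Hom.comp_apply, Scheme.isoSpec_hom_naturality, Scheme.Hom.comp_apply]
  apply X.isoSpec.hom.homeomorph.injective
  exact PrimeSpectrum.eq_of_specializes_of_comap_eq hint (h.map X.isoSpec.hom.continuous)
    (show Spec.map f.appTop (X.isoSpec.hom x) = Spec.map f.appTop (X.isoSpec.hom x') by
      rw [hbase, hbase, hf])

theorem eq_of_specializes {x x' : X} (h : x ⤳ x') (hf : f x = f x') : x = x' := by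
  obtain ⟨_, ⟨U, hU, rfl⟩, hx'U, -⟩ :=
    Y.isBasis_affineOpens.exists_subset_of_mem_open (Set.mem_univ (f x')) isOpen_univ
  have : IsAffine U := hU
  let y : (f ⁻¹ᵁ U).toScheme := ⟨x, show f x ∈ U from hf ▸ hx'U⟩
  let y' : (f ⁻¹ᵁ U).toScheme := ⟨x', hx'U⟩
  have hyy' : y = y' := (f ∣_ U).eq_of_specializes_of_isAffine (x := y) (x' := y')
    ((subtype_specializes_iff _ _).mpr h) (Subtype.ext <|
      (morphismRestrict_base_coe f U y).trans (hf.trans (morphismRestrict_base_coe f U y').symm))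
  exact congrArg Subtype.val hyy'

end AlgebraicGeometry.Scheme.Hom

/-- There are no nontrivial specializations in the fibres of an integral morphism of schemes:
if `f : X ⟶ Y` is integral, `x' ∈ closure {x}` and `f x = f x'`, then `x = x'`. -/
theorem stmt_2 {X Y : Scheme} (f : X ⟶ Y) [IsIntegralHom f] (x x' : X)
    (h : x' ∈ closure ({x} : Set X)) (hf : f.base x = f.base x') :
    x = x' :=
  f.eq_of_specializes (specializes_iff_mem_closure.mpr h) hf
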